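/- The braided Lie algebra structure of the braided derivations of O(S^{2n}_θ) is given on the generators T_J by [T_I, T_J] = u_I T_J − λ_{IJ} u_J T_I, where [T_I,T_J] = T_I∘T_J − λ_{IJ} T_J∘T_I is the braided commutator. -/

import Mathlib

/-!
STATEMENT 13: the braided Lie algebra structure of the braided derivations of
the quantum sphere `O(S^{2n}_θ)` is given on the generators `T_J` by
`[T_I, T_J] = u_I T_J − λ_{IJ} u_J T_I`, where
`[T_I,T_J] = T_I∘T_J − λ_{IJ} T_J∘T_I` is the braided commutator.

The quantum sphere is modelled as a `ℂ`-algebra `A` graded by the torus weight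
lattice, generated by elements `u_I` (`I ∈ {1,…,2n+1}`) with `u_I ∙ u_J = λ_{IJ} u_J ∙ u_I`,
`u_I* = u_{I'}` (conjugation is encoded by the involution `I ↦ I' = inv I`),
sphere relation `Σ_I u_{I'} ∙ u_I = 1`.  The braided derivations `T_J` are given on
generators by `T_J(u_K) = δ_{JK'} − u_J ∙ u_K`, extended via the braided Leibniz rule
(the braiding acts on a homogeneous element of weight `m` by the factor `fac`),
and satisfy `Σ_J u_{J'} T_J = 0`.
-/

noncomputable section

open scoped BigOperators

namespace Statement13

/-- `λ_{IJ} = exp(−2πi θ_{IJ})`. -/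
def lam {I : Type*} (θm : I → I → ℝ) (i j : I) : ℂ :=
  Complex.exp (-(2 * (Real.pi : ℂ) * Complex.I) * (θm i j : ℂ))

/-- index set `{1, …, 2n+1}` -/
abbrev Idx (n : ℕ) := Fin (2 * n + 1)

/-- the weight lattice of the `n`-torus action -/
abbrev W (n : ℕ) := Idx n → ℤ

/-- the weight of the generator `u_I`: `e_I − e_{I'}`. -/
def wt {n : ℕ} (inv : Idx n → Idx n) (i : Idx n) : W n :=
  fun j => (if j = i then 1 else 0) - (if j = inv i then 1 else 0)

/-- the deformation parameters extended biadditively to the weight lattice -/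
def pairing {n : ℕ} (θm : Idx n → Idx n → ℝ) (p q : W n) : ℝ :=
  ∑ i, ∑ j, (p i : ℝ) * (q j : ℝ) * θm i j

/-- the braiding factor between homogeneous elements of weights `p` and `q`;
on generators `fac (wt inv I) (wt inv J) = λ_{IJ}`. -/
def fac {n : ℕ} (θm : Idx n → Idx n → ℝ) (p q : W n) : ℂ :=
  Complex.exp (-((Real.pi : ℂ) * Complex.I) * ((pairing θm p q : ℝ) : ℂ) / 2)

section aux

variable {n : ℕ} (inv : Idx n → Idx n) (θm : Idx n → Idx n → ℝ)

lemma pair0 (p : W n) : pairing θm p 0 = 0 := by simp [pairing]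

lemma pairadd (p q r : W n) : pairing θm p (q + r) = pairing θm p q + pairing θm p r := by
  simp [pairing, mul_add, add_mul, Finset.sum_add_distrib]

lemma fac0 (p : W n) : fac θm p 0 = 1 := by simp [fac, pair0]

lemma facadd (p q r : W n) : fac θm p (q + r) = fac θm p q * fac θm p r := by
  rw [fac, fac, fac, pairadd, ← Complex.exp_add]
  congr 1
  push_cast
  ring

lemma pairwt (hθ₁ : ∀ I J, θm I J = - θm J I) (hθ₂ : ∀ I J, θm I (inv J) = - θm I J)
    (K L : Idx n) : pairing θm (wt inv K) (wt inv L) = 4 * θm K L := by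
  have e2 : θm (inv K) L = - θm K L := by
    rw [hθ₁ (inv K) L, hθ₂ L K, hθ₁ L K]; ring
  have inner : ∀ i : Idx n, ∑ j, ((wt inv L j : ℤ) : ℝ) * θm i j = 2 * θm i L := by
    intro i
    have h : ∀ j : Idx n, ((wt inv L j : ℤ) : ℝ) * θm i j
        = (if j = L then θm i j else 0) - (if j = inv L then θm i j else 0) := by
      intro j
      simp only [wt]
      split_ifs <;> push_cast <;> ring
    simp only [h, Finset.sum_sub_distrib, Finset.sum_ite_eq', Finset.mem_univ, if_true]
    rw [hθ₂ i L]; ring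
  calc pairing θm (wt inv K) (wt inv L)
      = ∑ i, ((wt inv K i : ℤ) : ℝ) * (2 * θm i L) := by
        rw [pairing]
        refine Finset.sum_congr rfl fun i _ => ?_
        rw [← inner i, Finset.mul_sum]
        refine Finset.sum_congr rfl fun j _ => ?_
        ring
    _ = 4 * θm K L := by
        have h : ∀ i : Idx n, ((wt inv K i : ℤ) : ℝ) * (2 * θm i L)
            = (if i = K then 2 * θm i L else 0) - (if i = inv K then 2 * θm i L else 0) := by
          intro i
          simp only [wt]
          split_ifs <;> push_cast <;> ring
        simp only [h, Finset.sum_sub_distrib, Finset.sum_ite_eq', Finset.mem_univ, if_true]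
        rw [e2]; ring

lemma facwt (hθ₁ : ∀ I J, θm I J = - θm J I) (hθ₂ : ∀ I J, θm I (inv J) = - θm I J)
    (K L : Idx n) : fac θm (wt inv K) (wt inv L) = lam θm K L := by
  rw [fac, pairwt inv θm hθ₁ hθ₂, lam]
  congr 1; push_cast; ring

lemma laminv (hθ₁ : ∀ I J, θm I J = - θm J I) (K L : Idx n) :
    lam θm K L * lam θm L K = 1 := by
  rw [lam, lam, ← Complex.exp_add, hθ₁ L K]
  have h : -(2 * (Real.pi : ℂ) * Complex.I) * ((θm K L : ℝ) : ℂ)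
      + -(2 * (Real.pi : ℂ) * Complex.I) * (((- θm K L : ℝ)) : ℂ) = 0 := by
    push_cast; ring
  rw [h, Complex.exp_zero]

lemma lamself (hθ₁ : ∀ I J, θm I J = - θm J I) (hθ₂ : ∀ I J, θm I (inv J) = - θm I J)
    (K : Idx n) : lam θm K (inv K) = 1 := by
  have h : θm K (inv K) = 0 := by
    have := hθ₁ K K
    have h2 := hθ₂ K K
    linarith
  rw [lam, h]
  simp

lemma wtneg (hinv : ∀ I, inv (inv I) = I) (K : Idx n) : wt inv (inv K) = - wt inv K := by
  funext j; simp [wt, hinv]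

end aux

theorem braided_bracket_of_sphere_derivations
    {n : ℕ}
    (A : Type*) [Ring A] [Algebra ℂ A]
    -- the involution `I ↦ I'` with fixed point `z0` ("the index 0")
    (inv : Idx n → Idx n) (z0 : Idx n)
    (hinv : ∀ I, inv (inv I) = I) (hz0 : inv z0 = z0)
    -- deformation parameters
    (θm : Idx n → Idx n → ℝ)
    (hθ₁ : ∀ I J, θm I J = - θm J I)
    (hθ₂ : ∀ I J, θm I (inv J) = - θm I J)
    -- torus-weight grading of `A`
    (𝒜 : W n → Submodule ℂ A) [GradedAlgebra 𝒜]
    -- generators of the sphere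
    (u : Idx n → A)
    (hu : ∀ I, u I ∈ 𝒜 (wt inv I))
    (hgen : Algebra.adjoin ℂ (Set.range u) = ⊤)
    (hcomm : ∀ I J, u I * u J = lam θm I J • (u J * u I))
    (hsph : ∑ I, u (inv I) * u I = 1)
    -- the braided derivations `T_J`
    (T : Idx n → Module.End ℂ A)
    (hTval : ∀ J K, T J (u K) = (if K = inv J then 1 else 0) - u J * u K)
    (hTLeib : ∀ J (m : W n) (x y : A), x ∈ 𝒜 m →
      T J (x * y) = T J x * y + fac θm (wt inv J) m • (x * T J y))
    (hTsum : (∑ J, (LinearMap.mulLeft ℂ (u (inv J))) ∘ₗ T J) = 0) :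
    -- `[T_I, T_J] = u_I T_J − λ_{IJ} u_J T_I`
    ∀ I J, T I ∘ₗ T J - lam θm I J • (T J ∘ₗ T I)
      = (LinearMap.mulLeft ℂ (u I)) ∘ₗ T J
        - lam θm I J • ((LinearMap.mulLeft ℂ (u J)) ∘ₗ T I) := by
  classical
  have hfacwt := facwt inv θm hθ₁ hθ₂
  have hlaminv := laminv θm hθ₁
  have hlamself := lamself inv θm hθ₁ hθ₂
  have hwneg := wtneg inv hinv
  -- T kills 1
  have hT1 : ∀ K, T K (1 : A) = 0 := by
    intro K
    have h := hTLeib K 0 1 1 (SetLike.one_mem_graded 𝒜)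
    simp only [mul_one, one_mul, fac0, one_smul] at h
    exact (left_eq_add.mp h)
  -- bracket identity on generators
  have key_gen : ∀ P Q L, T P (T Q (u L)) - lam θm P Q • T Q (T P (u L))
      = u P * T Q (u L) - lam θm P Q • (u Q * T P (u L)) := by
    intro P Q L
    have hTT : ∀ P' Q' , T P' (T Q' (u L))
        = -(T P' (u Q') * u L) - lam θm P' Q' • (u Q' * T P' (u L)) := by
      intro P' Q'
      rw [hTval Q' L, map_sub]
      have hδ : T P' ((if L = inv Q' then (1 : A) else 0)) = 0 := by
        split_ifs
        · exact hT1 P'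
        · exact map_zero _
      rw [hδ, hTLeib P' (wt inv Q') (u Q') (u L) (hu Q'), hfacwt P' Q']
      rw [zero_sub, neg_add, ← sub_eq_add_neg]
    rw [hTT P Q, hTT Q P, hTval P Q, hTval Q P, hTval P L, hTval Q L]
    -- δ and commutation facts
    have hc3 : u P * (u Q * u L) = lam θm P Q • (u Q * (u P * u L)) := by
      rw [← mul_assoc, hcomm P Q, smul_mul_assoc, mul_assoc]
    have hd : lam θm P Q • ((if P = inv Q then (1 : A) else 0) * u L)
        = (if Q = inv P then (1 : A) else 0) * u L := by
      by_cases h : P = inv Q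
      · have h' : Q = inv P := by rw [h, hinv]
        have hl1 : lam θm P Q = 1 := by rw [h']; exact hlamself P
        rw [hl1, one_smul, if_pos h, if_pos h']
      · have h' : ¬ Q = inv P := fun hq => h (by rw [hq, hinv])
        rw [if_neg h, if_neg h', zero_mul, smul_zero]
    have hscal : lam θm P Q * lam θm Q P = 1 := hlaminv P Q
    simp only [sub_mul, mul_sub, smul_sub, smul_add, neg_sub, smul_smul, mul_assoc]
    rw [hc3]
    rw [hd]
    rw [hscal]
    simp only [one_smul, smul_smul]
    module
  -- bracket identity: closure under products
  have key_mul : ∀ (P Q : Idx n) (m : W n) (x y : A), x ∈ 𝒜 m →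
      (∀ K, T K x ∈ 𝒜 (wt inv K + m)) →
      (∀ K, u K * x = fac θm (wt inv K) m • (x * u K)) →
      (T P (T Q x) - lam θm P Q • T Q (T P x) = u P * T Q x - lam θm P Q • (u Q * T P x)) →
      (T P (T Q y) - lam θm P Q • T Q (T P y) = u P * T Q y - lam θm P Q • (u Q * T P y)) →
      T P (T Q (x * y)) - lam θm P Q • T Q (T P (x * y))
        = u P * T Q (x * y) - lam θm P Q • (u Q * T P (x * y)) := by
    intro P Q m x y hx hTx hux hbx hby
    set fP := fac θm (wt inv P) m with hfP
    set fQ := fac θm (wt inv Q) m with hfQ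
    have h1 : T Q (x * y) = T Q x * y + fQ • (x * T Q y) := hTLeib Q m x y hx
    have h1' : T P (x * y) = T P x * y + fP • (x * T P y) := hTLeib P m x y hx
    have hL : T P (T Q (x * y)) = T P (T Q x) * y + (lam θm P Q * fP) • (T Q x * T P y)
        + fQ • (T P x * T Q y) + (fQ * fP) • (x * T P (T Q y)) := by
      rw [h1, map_add, map_smul,
        hTLeib P (wt inv Q + m) (T Q x) y (hTx Q),
        hTLeib P m x (T Q y) hx, facadd, hfacwt]
      simp only [smul_add, smul_smul]
      abel
    have hL' : T Q (T P (x * y)) = T Q (T P x) * y + (lam θm Q P * fQ) • (T P x * T Q y)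
        + fP • (T Q x * T P y) + (fP * fQ) • (x * T Q (T P y)) := by
      rw [h1', map_add, map_smul,
        hTLeib Q (wt inv P + m) (T P x) y (hTx P),
        hTLeib Q m x (T P y) hx, facadd, hfacwt]
      simp only [smul_add, smul_smul]
      abel
    have hR : u P * T Q (x * y) = (u P * T Q x) * y + (fQ * fP) • (x * (u P * T Q y)) := by
      rw [h1, mul_add, mul_smul_comm, ← mul_assoc, ← mul_assoc, hux P, smul_mul_assoc,
        mul_assoc, smul_smul]
      simp [mul_assoc]
      rw [← hfP]
    have hR' : u Q * T P (x * y) = (u Q * T P x) * y + (fP * fQ) • (x * (u Q * T P y)) := by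
      rw [h1', mul_add, mul_smul_comm, ← mul_assoc, ← mul_assoc, hux Q, smul_mul_assoc,
        mul_assoc, smul_smul]
      simp [mul_assoc]
      rw [← hfQ]
    have hbx2 : T P (T Q x) = u P * T Q x - lam θm P Q • (u Q * T P x)
        + lam θm P Q • T Q (T P x) := by rw [← hbx]; abel
    have hby2 : T P (T Q y) = u P * T Q y - lam θm P Q • (u Q * T P y)
        + lam θm P Q • T Q (T P y) := by rw [← hby]; abel
    have hs : lam θm P Q * (lam θm Q P * fQ) = fQ := by
      rw [← mul_assoc, hlaminv, one_mul]
    rw [hL, hL', hR, hR', hbx2, hby2]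
    simp only [add_mul, sub_mul, smul_mul_assoc, smul_add, smul_sub, smul_smul, mul_add, mul_sub,
      mul_smul_comm]
    rw [hs]
    module
  -- the set of good homogeneous elements
  set G : Set A := {x | ∃ m : W n, x ∈ 𝒜 m ∧ (∀ K, T K x ∈ 𝒜 (wt inv K + m)) ∧
      (∀ K, u K * x = fac θm (wt inv K) m • (x * u K)) ∧
      (∀ P Q, T P (T Q x) - lam θm P Q • T Q (T P x)
        = u P * T Q x - lam θm P Q • (u Q * T P x))} with hGdef
  have hone : (1 : A) ∈ G := by
    refine ⟨0, SetLike.one_mem_graded 𝒜, ?_, ?_, ?_⟩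
    · intro K
      rw [hT1 K]
      exact zero_mem _
    · intro K
      rw [mul_one, one_mul, fac0, one_smul]
    · intro P Q
      simp [hT1]
  have hu_mem : ∀ L, u L ∈ G := by
    intro L
    refine ⟨wt inv L, hu L, ?_, ?_, fun P Q => key_gen P Q L⟩
    · intro K
      rw [hTval K L]
      by_cases h : L = inv K
      · have hzero : wt inv K + wt inv L = 0 := by
          rw [h, hwneg K]; abel
        rw [if_pos h, hzero]
        refine sub_mem (SetLike.one_mem_graded 𝒜) ?_
        have hm := SetLike.mul_mem_graded (hu K) (hu L)
        rwa [hzero] at hm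
      · rw [if_neg h, zero_sub]
        exact neg_mem (SetLike.mul_mem_graded (hu K) (hu L))
    · intro K
      rw [hfacwt K L]
      exact hcomm K L
  have hmul_mem : ∀ x ∈ G, ∀ y ∈ G, x * y ∈ G := by
    rintro x ⟨m, hx, hTx, hux, hbx⟩ y ⟨m', hy, hTy, huy, hby⟩
    refine ⟨m + m', SetLike.mul_mem_graded hx hy, ?_, ?_, ?_⟩
    · intro K
      rw [hTLeib K m x y hx]
      refine add_mem ?_ (Submodule.smul_mem _ _ ?_)
      · have hm := SetLike.mul_mem_graded (hTx K) hy
        rwa [add_assoc] at hm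
      · have hm := SetLike.mul_mem_graded hx (hTy K)
        have heq : m + (wt inv K + m') = wt inv K + (m + m') := by abel
        rwa [heq] at hm
    · intro K
      rw [← mul_assoc, hux K, smul_mul_assoc, mul_assoc, huy K, mul_smul_comm, smul_smul,
        ← facadd]
      simp [mul_assoc]
    · intro P Q
      exact key_mul P Q m x y hx hTx hux (hbx P Q) (hby P Q)
  -- the span of G is everything
  have hGspan_mul : ∀ (x y : A), x ∈ Submodule.span ℂ G → y ∈ Submodule.span ℂ G →
      x * y ∈ Submodule.span ℂ G := by
    intro x y hx hy
    have h : Submodule.span ℂ G * Submodule.span ℂ G ≤ Submodule.span ℂ G := by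
      rw [Submodule.span_mul_span]
      refine Submodule.span_le.mpr ?_
      rintro z ⟨a, ha, b, hb, rfl⟩
      exact Submodule.subset_span (hmul_mem a ha b hb)
    exact h (Submodule.mul_mem_mul hx hy)
  have hall : ∀ a : A, a ∈ Submodule.span ℂ G := by
    intro a
    have hle : Algebra.adjoin ℂ (Set.range u)
        ≤ (Submodule.span ℂ G).toSubalgebra (Submodule.subset_span hone) hGspan_mul := by
      apply Algebra.adjoin_le
      rintro _ ⟨L, rfl⟩
      exact Submodule.subset_span (hu_mem L)
    have : a ∈ Algebra.adjoin ℂ (Set.range u) := by rw [hgen]; trivial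
    exact hle this
  -- conclude
  intro I J
  set D : Module.End ℂ A := (T I ∘ₗ T J - lam θm I J • (T J ∘ₗ T I))
      - ((LinearMap.mulLeft ℂ (u I)) ∘ₗ T J
        - lam θm I J • ((LinearMap.mulLeft ℂ (u J)) ∘ₗ T I)) with hDdef
  have hDG : ∀ x ∈ G, D x = 0 := by
    rintro x ⟨m, _, _, _, hb⟩
    have hbIJ := hb I J
    simp only [hDdef, LinearMap.sub_apply, LinearMap.smul_apply, LinearMap.comp_apply,
      LinearMap.mulLeft_apply]
    rw [hbIJ]
    simp
  have hD0 : ∀ a : A, D a = 0 := by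
    intro a
    have ha := hall a
    induction ha using Submodule.span_induction with
    | mem x hx => exact hDG x hx
    | zero => simp
    | add x y _ _ ihx ihy => rw [map_add, ihx, ihy, add_zero]
    | smul c x _ ihx => rw [map_smul, ihx, smul_zero]
  have : D = 0 := LinearMap.ext fun a => by rw [hD0 a]; rfl
  have := sub_eq_zero.mp this
  exact this


end Statement13
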